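/- Consider the ODE df/dt = (A + B) f on ℝ⁴, where A := (1/2)[[−1,1,0,0],[1,−1,0,0],[0,0,−1,1],[0,0,1,−1]] and B := [[0,−1,0,1],[1,0,−1,0],[0,1,0,−1],[−1,0,1,0]]. Then there exists a constant c ≥ 1 such that for every initial datum f^I ∈ ℝ⁴ with f_1^I + f_2^I + f_3^I + f_4^I = 1, the solution f(t) = e^{t(A+B)} f^I satisfies ‖f(t) − f^∞‖ ≤ c · e^{−t/2} · ‖f^I − f^∞‖ for all t ≥ 0, where f^∞ := (1/4)(1,1,1,1)ᵀ and ‖·‖ is the Euclidean norm on ℝ⁴. -/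

import Mathlib

/-!
Mass is conserved because `1ᵀ (A + B) = 0`. The row vectors `a = (-1,1,-1,1)`, `b = (-1,0,1,0)`,
`c = (0,-1,0,1)` span the orthogonal complement of the constants and `(A + B)ᵀ` leaves their span
invariant: `a ⬝ f` decays like `e^{-t}`, while `(b ⬝ f, c ⬝ f)` follows the damped rotation
`[[-1/2, -3/2], [5/2, -1/2]]` (eigenvalues `-1/2 ± i√15/2`). The weights in
`W = (a ⬝ f)² + 5 (b ⬝ f)² + 3 (c ⬝ f)²` cancel the rotation, so `W' ≤ -W` and
`W(t) ≤ e^{-t} W(0)`. For mass-one `f`, `2 ‖f - f^∞‖² ≤ W(f) ≤ 10 ‖f - f^∞‖²`, which gives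
`c = √5 ≤ 3`.
-/

open Matrix

/-- The BGK interaction matrix `A` of the discrete (4-state) hypocoercive model. -/
noncomputable def bgkA : Matrix (Fin 4) (Fin 4) ℝ :=
  (1/2 : ℝ) • !![-1, 1, 0, 0; 1, -1, 0, 0; 0, 0, -1, 1; 0, 0, 1, -1]

/-- The skew-symmetric transport matrix `B` of the discrete hypocoercive model. -/
noncomputable def bgkB : Matrix (Fin 4) (Fin 4) ℝ :=
  !![0, -1, 0, 1; 1, 0, -1, 0; 0, 1, 0, -1; -1, 0, 1, 0]

theorem le_exp_mul_of_hasDerivAt_le_mul {W W' : ℝ → ℝ} {r : ℝ}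
    (hW : ∀ s, HasDerivAt W (W' s) s) (hle : ∀ s, W' s ≤ -r * W s) {t : ℝ} (ht : 0 ≤ t) :
    W t ≤ Real.exp (-r * t) * W 0 := by
  have hderiv : ∀ s, HasDerivAt (fun s => Real.exp (r * s) * W s)
      (Real.exp (r * s) * (r * W s + W' s)) s := fun s =>
    (((hasDerivAt_id' s).const_mul r).exp.mul (hW s)).congr_deriv (by ring)
  have hanti : Antitone fun s => Real.exp (r * s) * W s :=
    antitone_of_hasDerivAt_nonpos hderiv fun s =>
      mul_nonpos_of_nonneg_of_nonpos (Real.exp_pos _).le (by linarith [hle s])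
  have := hanti ht
  simp only [mul_zero, Real.exp_zero, one_mul] at this
  rw [neg_mul, Real.exp_neg, inv_mul_eq_div, le_div_iff₀' (Real.exp_pos _)]
  exact this

section LinearODE

variable {ι : Type*} [Fintype ι] {M : Matrix ι ι ℝ} {f : ℝ → ι → ℝ}

theorem hasDerivAt_dotProduct_of_hasDerivAt_mulVec (hf : ∀ t, HasDerivAt f (M *ᵥ f t) t)
    (w : ι → ℝ) (t : ℝ) : HasDerivAt (fun s => w ⬝ᵥ f s) ((w ᵥ* M) ⬝ᵥ f t) t := by
  rw [← dotProduct_mulVec]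
  exact HasDerivAt.fun_sum (u := Finset.univ) (A := fun i s => w i * f s i) fun i _ =>
    (hasDerivAt_pi.1 (hf t) i).const_mul (w i)

theorem dotProduct_eq_of_vecMul_eq_zero (hf : ∀ t, HasDerivAt f (M *ᵥ f t) t)
    {w : ι → ℝ} (hw : w ᵥ* M = 0) (t : ℝ) : w ⬝ᵥ f t = w ⬝ᵥ f 0 := by
  have hderiv := hasDerivAt_dotProduct_of_hasDerivAt_mulVec hf w
  simp only [hw, zero_dotProduct] at hderiv
  exact is_const_of_deriv_eq_zero (fun s => (hderiv s).differentiableAt)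
    (fun s => (hderiv s).deriv) t 0

end LinearODE

section BGK

def bgkModeA : Fin 4 → ℝ := ![-1, 1, -1, 1]

def bgkModeB : Fin 4 → ℝ := ![-1, 0, 1, 0]

def bgkModeC : Fin 4 → ℝ := ![0, -1, 0, 1]

theorem one_vecMul_bgkA_add_bgkB : (1 : Fin 4 → ℝ) ᵥ* (bgkA + bgkB) = 0 := by
  ext i; fin_cases i <;> simp [bgkA, bgkB, vecMul, dotProduct, Fin.sum_univ_four]

theorem bgkModeA_vecMul : bgkModeA ᵥ* (bgkA + bgkB) = -bgkModeA := by
  ext i; fin_cases i <;>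
    simp [bgkModeA, bgkA, bgkB, vecMul, dotProduct, Fin.sum_univ_four] <;> norm_num

theorem bgkModeB_vecMul :
    bgkModeB ᵥ* (bgkA + bgkB) = -(1/2 : ℝ) • bgkModeB - (3/2 : ℝ) • bgkModeC := by
  ext i; fin_cases i <;>
    simp [bgkModeB, bgkModeC, bgkA, bgkB, vecMul, dotProduct, Fin.sum_univ_four] <;> norm_num

theorem bgkModeC_vecMul :
    bgkModeC ᵥ* (bgkA + bgkB) = (5/2 : ℝ) • bgkModeB - (1/2 : ℝ) • bgkModeC := by
  ext i; fin_cases i <;>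
    simp [bgkModeB, bgkModeC, bgkA, bgkB, vecMul, dotProduct, Fin.sum_univ_four] <;> norm_num

def bgkLyapunov (v : Fin 4 → ℝ) : ℝ :=
  (bgkModeA ⬝ᵥ v) ^ 2 + 5 * (bgkModeB ⬝ᵥ v) ^ 2 + 3 * (bgkModeC ⬝ᵥ v) ^ 2

theorem bgkLyapunov_le_ten_mul_sum_sq (v : Fin 4 → ℝ) :
    bgkLyapunov v ≤ 10 * ∑ i, (v i - 1/4) ^ 2 := by
  simp only [bgkLyapunov, bgkModeA, bgkModeB, bgkModeC, dotProduct, Fin.sum_univ_four,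
    cons_val_zero, cons_val_one, cons_val]
  nlinarith [sq_nonneg (v 0 - v 1 + v 2 - v 3), sq_nonneg (v 0 + v 1 + v 2 + v 3 - 1)]

theorem two_mul_sum_sq_le_bgkLyapunov {v : Fin 4 → ℝ} (hv : ∑ i, v i = 1) :
    2 * ∑ i, (v i - 1/4) ^ 2 ≤ bgkLyapunov v := by
  rw [Fin.sum_univ_four] at hv
  simp only [bgkLyapunov, bgkModeA, bgkModeB, bgkModeC, dotProduct, Fin.sum_univ_four,
    cons_val_zero, cons_val_one, cons_val]
  nlinarith [sq_nonneg (v 0 - v 1 + v 2 - v 3), sq_nonneg (v 0 - v 2), sq_nonneg (v 1 - v 3)]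

variable {f : ℝ → Fin 4 → ℝ}

theorem hasDerivAt_bgkLyapunov (hf : ∀ t, HasDerivAt f ((bgkA + bgkB) *ᵥ f t) t) (t : ℝ) :
    HasDerivAt (fun s => bgkLyapunov (f s))
      (-2 * (bgkModeA ⬝ᵥ f t) ^ 2 - 5 * (bgkModeB ⬝ᵥ f t) ^ 2
        - 3 * (bgkModeC ⬝ᵥ f t) ^ 2) t := by
  have hA := hasDerivAt_dotProduct_of_hasDerivAt_mulVec hf bgkModeA t
  have hB := hasDerivAt_dotProduct_of_hasDerivAt_mulVec hf bgkModeB t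
  have hC := hasDerivAt_dotProduct_of_hasDerivAt_mulVec hf bgkModeC t
  rw [bgkModeA_vecMul] at hA
  rw [bgkModeB_vecMul] at hB
  rw [bgkModeC_vecMul] at hC
  refine (((hA.pow 2).add ((hB.pow 2).const_mul 5)).add ((hC.pow 2).const_mul 3)).congr_deriv ?_
  simp only [neg_dotProduct, sub_dotProduct, smul_dotProduct, smul_eq_mul]
  push_cast
  ring

theorem bgkLyapunov_le_exp_mul (hf : ∀ t, HasDerivAt f ((bgkA + bgkB) *ᵥ f t) t) {t : ℝ}
    (ht : 0 ≤ t) : bgkLyapunov (f t) ≤ Real.exp (-t) * bgkLyapunov (f 0) := by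
  simpa using le_exp_mul_of_hasDerivAt_le_mul (r := 1) (hasDerivAt_bgkLyapunov hf)
    (fun s => by simp only [bgkLyapunov]; nlinarith [sq_nonneg (bgkModeA ⬝ᵥ f s)]) ht

end BGK

theorem stmt_12 :
    ∃ c : ℝ, 1 ≤ c ∧
      ∀ fI : Fin 4 → ℝ, (∑ i, fI i) = 1 →
      ∀ f : ℝ → Fin 4 → ℝ, f 0 = fI →
      (∀ t : ℝ, HasDerivAt f ((bgkA + bgkB) *ᵥ f t) t) →
      ∀ t : ℝ, 0 ≤ t →
        Real.sqrt (∑ i, (f t i - 1/4) ^ 2) ≤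
          c * Real.exp (-t/2) * Real.sqrt (∑ i, (fI i - 1/4) ^ 2) := by
  refine ⟨3, by norm_num, fun fI hmass f hf0 hf t ht => ?_⟩
  have hmass_t : ∑ i, f t i = 1 := by
    rw [← one_dotProduct, dotProduct_eq_of_vecMul_eq_zero hf one_vecMul_bgkA_add_bgkB,
      one_dotProduct, hf0, hmass]
  have hS : 0 ≤ ∑ i, (fI i - 1/4) ^ 2 := Finset.sum_nonneg fun i _ => sq_nonneg _
  have hsq : ∑ i, (f t i - 1/4) ^ 2 ≤ (3 * Real.exp (-t/2)) ^ 2 * ∑ i, (fI i - 1/4) ^ 2 :=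
    calc ∑ i, (f t i - 1/4) ^ 2
        ≤ bgkLyapunov (f t) / 2 := by linarith [two_mul_sum_sq_le_bgkLyapunov hmass_t]
      _ ≤ Real.exp (-t) * bgkLyapunov fI / 2 := by
        rw [← hf0]; linarith [bgkLyapunov_le_exp_mul hf ht]
      _ ≤ Real.exp (-t) * (10 * ∑ i, (fI i - 1/4) ^ 2) / 2 := by
        gcongr; exact bgkLyapunov_le_ten_mul_sum_sq fI
      _ ≤ (3 * Real.exp (-t/2)) ^ 2 * ∑ i, (fI i - 1/4) ^ 2 := by
        have hexp : Real.exp (-t/2) ^ 2 = Real.exp (-t) := by rw [← Real.exp_nat_mul]; ring_nf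
        rw [mul_pow, hexp]; nlinarith [mul_nonneg (Real.exp_pos (-t)).le hS]
  calc Real.sqrt (∑ i, (f t i - 1/4) ^ 2)
      ≤ Real.sqrt ((3 * Real.exp (-t/2)) ^ 2 * ∑ i, (fI i - 1/4) ^ 2) := Real.sqrt_le_sqrt hsq
    _ = 3 * Real.exp (-t/2) * Real.sqrt (∑ i, (fI i - 1/4) ^ 2) := by
      rw [Real.sqrt_mul (sq_nonneg _), Real.sqrt_sq (by positivity)]
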